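/- arXiv:2101.11083 — 4 statements merged into one kernel-verified Lean document; each statement's English description precedes it below -/
import Mathlib

section
/- Let G ∈ 𝒫_T be a conditionally uniform probability measure on a finite dyadic partition tree T of (0,1]^d with tree-CDF 𝐆. Then for every Borel set B ⊆ (0,1]^d, G(B) = μ(𝐆(B)), where μ is Lebesgue measure and 𝐆(B) = {𝐆(x) : x ∈ B}. -/
open MeasureTheory Set

/-- An axis-aligned half-open box `∏ⱼ (lo j, hi j]` in `ℝ^d`. -/
structure Box (d : ℕ) where
  lo : Fin d → ℝ
  hi : Fin d → ℝ

/-- The subset of `ℝ^d` represented by a box. -/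
def Box.set {d : ℕ} (B : Box d) : Set (Fin d → ℝ) :=
  Set.univ.pi fun j => Ioc (B.lo j) (B.hi j)

/-- The left child obtained by splitting coordinate `j` at `s`. -/
def Box.left {d : ℕ} (B : Box d) (j : Fin d) (s : ℝ) : Box d :=
  ⟨B.lo, Function.update B.hi j s⟩

/-- The right child obtained by splitting coordinate `j` at `s`. -/
def Box.right {d : ℕ} (B : Box d) (j : Fin d) (s : ℝ) : Box d :=
  ⟨Function.update B.lo j s, B.hi⟩

/-- A finite recursive dyadic partition tree: each interior node splits its box at
coordinate `j`, position `s`, and carries the conditional probability `θ = G(A_l | A)`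
of its left child. -/
inductive DTree (d : ℕ) where
  | leaf : DTree d
  | node (j : Fin d) (s θ : ℝ) (l r : DTree d) : DTree d

/-- Validity of a tree with respect to a box: every split point is interior to the
current box and every conditional probability lies in `(0,1)`. -/
def DTree.valid {d : ℕ} : DTree d → Box d → Prop
  | .leaf, B => ∀ i, B.lo i < B.hi i
  | .node j s θ l r, B =>
      (∀ i, B.lo i < B.hi i) ∧ B.lo j < s ∧ s < B.hi j ∧ 0 < θ ∧ θ < 1 ∧
        l.valid (B.left j s) ∧ r.valid (B.right j s)

/-- The local move `𝐆_A` of a node: it fixes all coordinates except the split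
coordinate `j`, where it applies the piecewise affine map determined by the conditional
probability `θ` of the left child. -/
noncomputable def localMove {d : ℕ} (B : Box d) (j : Fin d) (s θ : ℝ)
    (x : Fin d → ℝ) : Fin d → ℝ :=
  Function.update x j
    (if x j ≤ s then
        B.lo j + (x j - B.lo j) * (θ * (B.hi j - B.lo j) / (s - B.lo j))
      else
        B.hi j - (B.hi j - x j) * ((1 - θ) * (B.hi j - B.lo j) / (B.hi j - s)))

/-- The tree-CDF `𝐆 = 𝐆_{A₁} ∘ ⋯ ∘ 𝐆_{A_{R−1}}`: along the branch containing `x`, the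
local moves are applied from the finest ancestor up to the root. -/
noncomputable def treeCDF {d : ℕ} : DTree d → Box d → (Fin d → ℝ) → (Fin d → ℝ)
  | .leaf, _, x => x
  | .node j s θ l r, B, x =>
      localMove B j s θ
        (if x j ≤ s then treeCDF l (B.left j s) x else treeCDF r (B.right j s) x)

/-- The conditionally uniform measure `G ∈ 𝒫_T` determined by the tree: uniform on each
leaf box, with conditional probability `θ` on the left child of each interior node. -/
noncomputable def treeMeasure {d : ℕ} : DTree d → Box d → Measure (Fin d → ℝ)
  | .leaf, B => (volume B.set)⁻¹ • volume.restrict B.set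
  | .node j s θ l r, B =>
      ENNReal.ofReal θ • treeMeasure l (B.left j s) +
        ENNReal.ofReal (1 - θ) • treeMeasure r (B.right j s)

/-- The unit box `(0,1]^d`. -/
def unitBox (d : ℕ) : Box d := ⟨fun _ => 0, fun _ => 1⟩

/-!
Induct on the tree, proving for every valid subtree on a box `A` and every measurable
`S ⊆ A` that `𝐆(S)` is measurable with `μ(𝐆(S)) = μ(A) · G(S)`. At a node splitting `A`
into `A_l, A_r`, the map `𝐆` acts on `S ∩ A_l` as the subtree's map followed by a stretch
of the split coordinate with ratio `θ μ(A) / μ(A_l)`, which multiplies Lebesgue measure by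
that ratio; likewise on `S ∩ A_r` with `1 - θ`. The two images lie on either side of the
hyperplane `x_j = lo_j + θ (hi_j - lo_j)`, so their measures add, and the resulting identity
is exactly the recursion defining `G`.
-/

namespace Box

variable {d : ℕ}

lemma mem_set {B : Box d} {x : Fin d → ℝ} : x ∈ B.set ↔ ∀ i, x i ∈ Ioc (B.lo i) (B.hi i) := by
  simp [Box.set]

lemma measurableSet_set (B : Box d) : MeasurableSet B.set :=
  .univ_pi fun _ => measurableSet_Ioc

lemma set_left {B : Box d} {j : Fin d} {s : ℝ} (h : s ≤ B.hi j) :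
    (B.left j s).set = B.set ∩ {x | x j ≤ s} := by
  ext x
  simp only [mem_inter_iff, mem_set, mem_ofPred_eq, Box.left]
  constructor
  · intro hx
    refine ⟨fun i => ?_, by simpa using (hx j).2⟩
    rcases eq_or_ne i j with rfl | hi
    · simpa using ⟨(hx i).1, (hx i).2.trans (by simpa using h)⟩
    · simpa [hi] using hx i
  · rintro ⟨hx, hxj⟩ i
    rcases eq_or_ne i j with rfl | hi
    · simpa using ⟨(hx i).1, hxj⟩
    · simpa [hi] using hx i

lemma set_right {B : Box d} {j : Fin d} {s : ℝ} (h : B.lo j ≤ s) :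
    (B.right j s).set = B.set ∩ {x | s < x j} := by
  ext x
  simp only [mem_inter_iff, mem_set, mem_ofPred_eq, Box.right]
  constructor
  · intro hx
    refine ⟨fun i => ?_, by simpa using (hx j).1⟩
    rcases eq_or_ne i j with rfl | hi
    · simpa using ⟨h.trans_lt (by simpa using (hx i).1), (hx i).2⟩
    · simpa [hi] using hx i
  · rintro ⟨hx, hxj⟩ i
    rcases eq_or_ne i j with rfl | hi
    · simpa using ⟨hxj, (hx i).2⟩
    · simpa [hi] using hx i

lemma apply_le_of_mem_left {B : Box d} {j : Fin d} {s : ℝ} {x : Fin d → ℝ}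
    (hx : x ∈ (B.left j s).set) : x j ≤ s := by
  simpa [Box.left] using (mem_set.1 hx j).2

lemma lt_apply_of_mem_right {B : Box d} {j : Fin d} {s : ℝ} {x : Fin d → ℝ}
    (hx : x ∈ (B.right j s).set) : s < x j := by
  simpa [Box.right] using (mem_set.1 hx j).1

lemma set_left_union_set_right {B : Box d} {j : Fin d} {s : ℝ} (h₀ : B.lo j ≤ s)
    (h₁ : s ≤ B.hi j) : (B.left j s).set ∪ (B.right j s).set = B.set := by
  rw [set_left h₁, set_right h₀, ← inter_union_distrib_left]
  exact inter_eq_left.2 fun x _ => le_or_gt (x j) s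

lemma update_mem_set {B : Box d} {x : Fin d → ℝ} {j : Fin d} {v : ℝ} (hx : x ∈ B.set)
    (hv : v ∈ Ioc (B.lo j) (B.hi j)) : Function.update x j v ∈ B.set := by
  rw [mem_set] at hx ⊢
  intro i
  rcases eq_or_ne i j with rfl | hi
  · simpa using hv
  · simpa [hi] using hx i

lemma volume_set (B : Box d) : volume B.set = ∏ i, ENNReal.ofReal (B.hi i - B.lo i) := by
  simp [Box.set, volume_pi_pi, Real.volume_Ioc]

lemma volume_set_eq_mul_prod_erase (B : Box d) (j : Fin d) :
    volume B.set = ENNReal.ofReal (B.hi j - B.lo j) *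
      ∏ i ∈ Finset.univ.erase j, ENNReal.ofReal (B.hi i - B.lo i) := by
  rw [volume_set, ← Finset.mul_prod_erase _ _ (Finset.mem_univ j)]

lemma volume_left {B : Box d} {j : Fin d} (h : B.lo j < B.hi j) (s : ℝ) :
    volume (B.left j s).set =
      ENNReal.ofReal ((s - B.lo j) / (B.hi j - B.lo j)) * volume B.set := by
  rw [volume_set_eq_mul_prod_erase _ j, volume_set_eq_mul_prod_erase _ j, ← mul_assoc,
    ← ENNReal.ofReal_mul' (sub_pos.2 h).le, div_mul_cancel₀ _ (sub_pos.2 h).ne']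
  refine congrArg₂ _ (by simp [Box.left]) (Finset.prod_congr rfl fun i hi => ?_)
  simp [Box.left, Function.update_of_ne (Finset.ne_of_mem_erase hi)]

lemma volume_right {B : Box d} {j : Fin d} (h : B.lo j < B.hi j) (s : ℝ) :
    volume (B.right j s).set =
      ENNReal.ofReal ((B.hi j - s) / (B.hi j - B.lo j)) * volume B.set := by
  rw [volume_set_eq_mul_prod_erase _ j, volume_set_eq_mul_prod_erase _ j, ← mul_assoc,
    ← ENNReal.ofReal_mul' (sub_pos.2 h).le, div_mul_cancel₀ _ (sub_pos.2 h).ne']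
  refine congrArg₂ _ (by simp [Box.right]) (Finset.prod_congr rfl fun i hi => ?_)
  simp [Box.right, Function.update_of_ne (Finset.ne_of_mem_erase hi)]

lemma volume_set_ne_zero {B : Box d} (h : ∀ i, B.lo i < B.hi i) : volume B.set ≠ 0 := by
  simpa [volume_set, Finset.prod_eq_zero_iff] using h

lemma volume_set_ne_top (B : Box d) : volume B.set ≠ ⊤ := by
  simp [volume_set, ENNReal.prod_ne_top]

end Box

section Stretch

variable {d : ℕ}

noncomputable def stretchAt (j : Fin d) (a c : ℝ) (x : Fin d → ℝ) : Fin d → ℝ :=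
  Function.update x j (a + c * (x j - a))

lemma stretchAt_eq_toLin'_add (j : Fin d) (a c : ℝ) (x : Fin d → ℝ) :
    stretchAt j a c x =
      Matrix.toLin' (Matrix.diagonal (Function.update 1 j c)) x + Pi.single j ((1 - c) * a) := by
  ext i
  rcases eq_or_ne i j with rfl | hi
  · simp only [stretchAt, Function.update_self, Matrix.toLin'_apply, Pi.add_apply,
      Matrix.mulVec_diagonal, Pi.single_eq_same]
    ring
  · simp [stretchAt, Matrix.mulVec_diagonal, hi]

lemma stretchAt_stretchAt (j : Fin d) (a c c' : ℝ) (x : Fin d → ℝ) :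
    stretchAt j a c (stretchAt j a c' x) = stretchAt j a (c * c') x := by
  simp only [stretchAt, Function.update_self, Function.update_idem]
  ring_nf

lemma stretchAt_one (j : Fin d) (a : ℝ) (x : Fin d → ℝ) : stretchAt j a 1 x = x := by
  simp [stretchAt]

lemma image_stretchAt_eq_preimage {c : ℝ} (hc : c ≠ 0) (j : Fin d) (a : ℝ) (S : Set (Fin d → ℝ)) :
    stretchAt j a c '' S = stretchAt j a c⁻¹ ⁻¹' S :=
  congrFun (image_eq_preimage_of_inverse (f := stretchAt j a c) (g := stretchAt j a c⁻¹)
    (fun x => by rw [stretchAt_stretchAt, inv_mul_cancel₀ hc, stretchAt_one])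
    (fun x => by rw [stretchAt_stretchAt, mul_inv_cancel₀ hc, stretchAt_one])) S

lemma measurable_stretchAt (j : Fin d) (a c : ℝ) : Measurable (stretchAt j a c) := by
  unfold stretchAt
  fun_prop

lemma MeasurableSet.image_stretchAt {c : ℝ} (hc : c ≠ 0) (j : Fin d) (a : ℝ)
    {S : Set (Fin d → ℝ)} (hS : MeasurableSet S) : MeasurableSet (stretchAt j a c '' S) := by
  rw [image_stretchAt_eq_preimage hc]
  exact measurable_stretchAt j a _ hS

lemma volume_image_stretchAt (j : Fin d) (a c : ℝ) (S : Set (Fin d → ℝ)) :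
    volume (stretchAt j a c '' S) = ENNReal.ofReal |c| * volume S := by
  have hdet : (Matrix.diagonal (Function.update (1 : Fin d → ℝ) j c)).det = c := by
    rw [Matrix.det_diagonal, Finset.prod_update_of_mem (Finset.mem_univ j)]
    simp
  rw [funext (stretchAt_eq_toLin'_add j a c), ← image_image (· + _), image_add_right,
    measure_preimage_add_right, Measure.addHaar_image_linearMap, LinearMap.det_toLin', hdet]

end Stretch

section LocalMove

variable {d : ℕ} {B : Box d} {j : Fin d} {s θ : ℝ}

noncomputable def leftScale (B : Box d) (j : Fin d) (s θ : ℝ) : ℝ :=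
  θ * (B.hi j - B.lo j) / (s - B.lo j)

noncomputable def rightScale (B : Box d) (j : Fin d) (s θ : ℝ) : ℝ :=
  (1 - θ) * (B.hi j - B.lo j) / (B.hi j - s)

lemma leftScale_pos (hs₀ : B.lo j < s) (hs₁ : s < B.hi j) (hθ : 0 < θ) :
    0 < leftScale B j s θ := by
  have := sub_pos.2 hs₀
  have := sub_pos.2 (hs₀.trans hs₁)
  unfold leftScale
  positivity

lemma rightScale_pos (hs₀ : B.lo j < s) (hs₁ : s < B.hi j) (hθ : θ < 1) :
    0 < rightScale B j s θ := by
  have := sub_pos.2 hs₁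
  have := sub_pos.2 (hs₀.trans hs₁)
  have := sub_pos.2 hθ
  unfold rightScale
  positivity

lemma ofReal_leftScale_mul_volume_left (hB : B.lo j < B.hi j) (hs : B.lo j < s) (hθ : 0 ≤ θ) :
    ENNReal.ofReal |leftScale B j s θ| * volume (B.left j s).set =
      ENNReal.ofReal θ * volume B.set := by
  have hw := sub_pos.2 hB
  have hc : 0 ≤ leftScale B j s θ := by unfold leftScale; have := sub_pos.2 hs; positivity
  rw [Box.volume_left hB, ← mul_assoc, abs_of_nonneg hc, ← ENNReal.ofReal_mul hc, leftScale]
  congr 2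
  field_simp [(sub_pos.2 hs).ne']

lemma ofReal_rightScale_mul_volume_right (hB : B.lo j < B.hi j) (hs : s < B.hi j)
    (hθ : θ ≤ 1) :
    ENNReal.ofReal |rightScale B j s θ| * volume (B.right j s).set =
      ENNReal.ofReal (1 - θ) * volume B.set := by
  have hw := sub_pos.2 hB
  have hc : 0 ≤ rightScale B j s θ := by
    unfold rightScale; have := sub_pos.2 hs; have := sub_nonneg.2 hθ; positivity
  rw [Box.volume_right hB, ← mul_assoc, abs_of_nonneg hc, ← ENNReal.ofReal_mul hc, rightScale]
  congr 2
  field_simp [(sub_pos.2 hs).ne']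

lemma localMove_eqOn_left :
    EqOn (localMove B j s θ) (stretchAt j (B.lo j) (leftScale B j s θ)) {y | y j ≤ s} :=
  fun y hy => by
    simp only [localMove, stretchAt, leftScale, if_pos (show y j ≤ s from hy)]
    ring_nf

lemma localMove_eqOn_right :
    EqOn (localMove B j s θ) (stretchAt j (B.hi j) (rightScale B j s θ)) {y | s < y j} :=
  fun y hy => by
    simp only [localMove, stretchAt, rightScale, if_neg (not_le.2 (show s < y j from hy))]
    ring_nf

lemma localMove_mapsTo_left (hs₀ : B.lo j < s) (hs₁ : s ≤ B.hi j) (hθ₀ : 0 < θ) (hθ₁ : θ ≤ 1) :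
    MapsTo (localMove B j s θ) (B.left j s).set
      (B.set ∩ {z | z j ≤ B.lo j + θ * (B.hi j - B.lo j)}) := by
  intro y hy
  have hyj : y j ∈ Ioc (B.lo j) s := by simpa [Box.left] using Box.mem_set.1 hy j
  set q := (y j - B.lo j) / (s - B.lo j)
  have hq₀ : 0 < q := div_pos (sub_pos.2 hyj.1) (sub_pos.2 hs₀)
  have hq₁ : q ≤ 1 := div_le_one_of_le₀ (by linarith [hyj.2]) (sub_pos.2 hs₀).le
  have hw : 0 < B.hi j - B.lo j := by linarith
  have hmove :
      localMove B j s θ y = Function.update y j (B.lo j + θ * (B.hi j - B.lo j) * q) := by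
    simp only [localMove, if_pos hyj.2, q]
    ring_nf
  have hθwq : θ * (B.hi j - B.lo j) * q ≤ θ * (B.hi j - B.lo j) :=
    mul_le_of_le_one_right (by positivity) hq₁
  rw [hmove]
  refine ⟨Box.update_mem_set ((Box.set_left hs₁).subset hy).1 ⟨?_, ?_⟩, ?_⟩
  · exact lt_add_of_pos_right _ (by positivity)
  · nlinarith
  · simp only [mem_ofPred_eq, Function.update_self]
    linarith

lemma localMove_mapsTo_right (hs₀ : B.lo j ≤ s) (hs₁ : s < B.hi j) (hθ₀ : 0 ≤ θ) (hθ₁ : θ < 1) :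
    MapsTo (localMove B j s θ) (B.right j s).set
      (B.set ∩ {z | B.lo j + θ * (B.hi j - B.lo j) < z j}) := by
  intro y hy
  have hyj : y j ∈ Ioc s (B.hi j) := by simpa [Box.right] using Box.mem_set.1 hy j
  set q := (B.hi j - y j) / (B.hi j - s)
  have hq₀ : 0 ≤ q := div_nonneg (sub_nonneg.2 hyj.2) (sub_pos.2 hs₁).le
  have hq₁ : q < 1 := (div_lt_one (sub_pos.2 hs₁)).2 (by linarith [hyj.1])
  have hw : 0 < B.hi j - B.lo j := by linarith
  have hmove : localMove B j s θ y =
      Function.update y j (B.hi j - (1 - θ) * (B.hi j - B.lo j) * q) := by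
    simp only [localMove, if_neg (not_le.2 hyj.1), q]
    ring_nf
  have hθwq : (1 - θ) * (B.hi j - B.lo j) * q < (1 - θ) * (B.hi j - B.lo j) :=
    mul_lt_of_lt_one_right (mul_pos (sub_pos.2 hθ₁) hw) hq₁
  rw [hmove]
  refine ⟨Box.update_mem_set ((Box.set_right hs₀).subset hy).1 ⟨?_, ?_⟩, ?_⟩
  · nlinarith
  · exact sub_le_self _ (by positivity)
  · simp only [mem_ofPred_eq, Function.update_self]
    linarith

end LocalMove

namespace DTree

variable {d : ℕ}

lemma treeCDF_node_eqOn_left (j : Fin d) (s θ : ℝ) (l r : DTree d) (B : Box d) :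
    EqOn (treeCDF (.node j s θ l r) B) (localMove B j s θ ∘ treeCDF l (B.left j s))
      (B.left j s).set := fun x hx => by
  simp [treeCDF, Box.apply_le_of_mem_left hx]

lemma treeCDF_node_eqOn_right (j : Fin d) (s θ : ℝ) (l r : DTree d) (B : Box d) :
    EqOn (treeCDF (.node j s θ l r) B) (localMove B j s θ ∘ treeCDF r (B.right j s))
      (B.right j s).set := fun x hx => by
  simp [treeCDF, not_le.2 (Box.lt_apply_of_mem_right hx)]

lemma image_treeCDF_node_left {j : Fin d} {s θ : ℝ} {l : DTree d} (r : DTree d) {B : Box d}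
    (hl : MapsTo (treeCDF l (B.left j s)) (B.left j s).set (B.left j s).set)
    {S : Set (Fin d → ℝ)} (hS : S ⊆ (B.left j s).set) :
    treeCDF (.node j s θ l r) B '' S =
      stretchAt j (B.lo j) (leftScale B j s θ) '' (treeCDF l (B.left j s) '' S) := by
  rw [((treeCDF_node_eqOn_left j s θ l r B).mono hS).image_eq, image_comp]
  exact (localMove_eqOn_left.mono fun y hy =>
    Box.apply_le_of_mem_left ((hl.mono_left hS).image_subset hy)).image_eq

lemma image_treeCDF_node_right {j : Fin d} {s θ : ℝ} (l : DTree d) {r : DTree d} {B : Box d}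
    (hr : MapsTo (treeCDF r (B.right j s)) (B.right j s).set (B.right j s).set)
    {S : Set (Fin d → ℝ)} (hS : S ⊆ (B.right j s).set) :
    treeCDF (.node j s θ l r) B '' S =
      stretchAt j (B.hi j) (rightScale B j s θ) '' (treeCDF r (B.right j s) '' S) := by
  rw [((treeCDF_node_eqOn_right j s θ l r B).mono hS).image_eq, image_comp]
  exact (localMove_eqOn_right.mono fun y hy =>
    Box.lt_apply_of_mem_right ((hr.mono_left hS).image_subset hy)).image_eq

lemma mapsTo_treeCDF : ∀ (T : DTree d) (B : Box d), T.valid B → MapsTo (treeCDF T B) B.set B.set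
  | .leaf, _, _ => fun _ hx => hx
  | .node j s θ l r, B, ⟨_, hs₀, hs₁, hθ₀, hθ₁, hl, hr⟩ => by
    intro x hx
    rw [← Box.set_left_union_set_right hs₀.le hs₁.le] at hx
    rcases hx with hx | hx
    · rw [treeCDF_node_eqOn_left j s θ l r B hx]
      exact (localMove_mapsTo_left hs₀ hs₁.le hθ₀ hθ₁.le (mapsTo_treeCDF l _ hl hx)).1
    · rw [treeCDF_node_eqOn_right j s θ l r B hx]
      exact (localMove_mapsTo_right hs₀.le hs₁ hθ₀.le hθ₁ (mapsTo_treeCDF r _ hr hx)).1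

lemma treeMeasure_compl_set : ∀ (T : DTree d) (B : Box d), T.valid B →
    treeMeasure T B B.setᶜ = 0
  | .leaf, B, _ => by
    simp [treeMeasure, Measure.restrict_apply B.measurableSet_set.compl]
  | .node j s θ l r, B, ⟨_, hs₀, hs₁, _, _, hl, hr⟩ => by
    have hlB : (B.left j s).set ⊆ B.set := (Box.set_left hs₁.le).symm ▸ inter_subset_left
    have hrB : (B.right j s).set ⊆ B.set := (Box.set_right hs₀.le).symm ▸ inter_subset_left
    simp only [treeMeasure, Measure.add_apply, Measure.smul_apply, smul_eq_mul,
      measure_mono_null (compl_subset_compl.2 hlB) (treeMeasure_compl_set l _ hl),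
      measure_mono_null (compl_subset_compl.2 hrB) (treeMeasure_compl_set r _ hr),
      mul_zero, add_zero]

lemma image_treeCDF_node {j : Fin d} {s θ : ℝ} {l r : DTree d} {B : Box d}
    (hT : (DTree.node j s θ l r).valid B) {S : Set (Fin d → ℝ)} (hSB : S ⊆ B.set) :
    treeCDF (.node j s θ l r) B '' S =
      stretchAt j (B.lo j) (leftScale B j s θ) ''
          (treeCDF l (B.left j s) '' (S ∩ (B.left j s).set)) ∪
        stretchAt j (B.hi j) (rightScale B j s θ) ''
          (treeCDF r (B.right j s) '' (S ∩ (B.right j s).set)) := by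
  obtain ⟨_, hs₀, hs₁, _, _, hl, hr⟩ := hT
  conv_lhs => rw [← inter_eq_left.2 hSB, ← Box.set_left_union_set_right hs₀.le hs₁.le,
    inter_union_distrib_left, image_union]
  rw [image_treeCDF_node_left r (mapsTo_treeCDF l _ hl) inter_subset_right,
    image_treeCDF_node_right l (mapsTo_treeCDF r _ hr) inter_subset_right]

lemma disjoint_image_treeCDF_node {j : Fin d} {s θ : ℝ} {l r : DTree d} {B : Box d}
    (hT : (DTree.node j s θ l r).valid B) {S S' : Set (Fin d → ℝ)}
    (hS : S ⊆ (B.left j s).set) (hS' : S' ⊆ (B.right j s).set) :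
    Disjoint (stretchAt j (B.lo j) (leftScale B j s θ) '' (treeCDF l (B.left j s) '' S))
      (stretchAt j (B.hi j) (rightScale B j s θ) '' (treeCDF r (B.right j s) '' S')) := by
  obtain ⟨_, hs₀, hs₁, hθ₀, hθ₁, hl, hr⟩ := hT
  rw [← image_treeCDF_node_left r (mapsTo_treeCDF l _ hl) hS,
    ← image_treeCDF_node_right l (mapsTo_treeCDF r _ hr) hS',
    ((treeCDF_node_eqOn_left j s θ l r B).mono hS).image_eq,
    ((treeCDF_node_eqOn_right j s θ l r B).mono hS').image_eq]
  have hsep : Disjoint {z : Fin d → ℝ | z j ≤ B.lo j + θ * (B.hi j - B.lo j)}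
      {z | B.lo j + θ * (B.hi j - B.lo j) < z j} :=
    disjoint_left.2 fun z (hz : z j ≤ _) hz' => hz.not_gt hz'
  refine hsep.mono ?_ ?_
  · exact ((localMove_mapsTo_left hs₀ hs₁.le hθ₀ hθ₁.le).comp
      ((mapsTo_treeCDF l _ hl).mono_left hS)).image_subset.trans inter_subset_right
  · exact ((localMove_mapsTo_right hs₀.le hs₁ hθ₀.le hθ₁).comp
      ((mapsTo_treeCDF r _ hr).mono_left hS')).image_subset.trans inter_subset_right

theorem volume_image_treeCDF : ∀ (T : DTree d) (B : Box d), T.valid B →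
    ∀ S, MeasurableSet S → S ⊆ B.set →
      MeasurableSet (treeCDF T B '' S) ∧
        volume (treeCDF T B '' S) = volume B.set * treeMeasure T B S
  | .leaf, B, hT, S, hS, hSB => by
    refine ⟨by simpa [treeCDF] using hS, ?_⟩
    rw [treeMeasure, Measure.smul_apply, Measure.restrict_apply hS, inter_eq_left.2 hSB,
      smul_eq_mul, ← mul_assoc, ENNReal.mul_inv_cancel (Box.volume_set_ne_zero hT)
      (Box.volume_set_ne_top B), one_mul]
    simp [treeCDF]
  | .node j s θ l r, B, hT, S, hS, hSB => by
    obtain ⟨hB, hs₀, hs₁, hθ₀, hθ₁, hl, hr⟩ := id hT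
    obtain ⟨hml, hvl⟩ := volume_image_treeCDF l _ hl (S ∩ _)
      (hS.inter (Box.measurableSet_set _)) inter_subset_right
    obtain ⟨hmr, hvr⟩ := volume_image_treeCDF r _ hr (S ∩ _)
      (hS.inter (Box.measurableSet_set _)) inter_subset_right
    have hmr' := hmr.image_stretchAt (rightScale_pos hs₀ hs₁ hθ₁).ne' j (B.hi j)
    rw [image_treeCDF_node hT hSB]
    refine ⟨(hml.image_stretchAt (leftScale_pos hs₀ hs₁ hθ₀).ne' j (B.lo j)).union hmr', ?_⟩
    rw [measure_union (disjoint_image_treeCDF_node hT inter_subset_right inter_subset_right) hmr',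
      volume_image_stretchAt, volume_image_stretchAt, hvl, hvr, ← mul_assoc, ← mul_assoc,
      ofReal_leftScale_mul_volume_left (hB j) hs₀ hθ₀.le,
      ofReal_rightScale_mul_volume_right (hB j) hs₁ hθ₁.le,
      measure_inter_conull (treeMeasure_compl_set l _ hl),
      measure_inter_conull (treeMeasure_compl_set r _ hr)]
    simp only [treeMeasure, Measure.add_apply, Measure.smul_apply, smul_eq_mul]
    ring

end DTree

/-- For a conditionally uniform probability measure `G ∈ 𝒫_T` on a finite
valid dyadic partition tree `T` of `(0,1]^d` with tree-CDF `𝐆`, one has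
`G(B) = μ(𝐆(B))` for every Borel set `B ⊆ (0,1]^d`, where `μ` is Lebesgue measure. -/
theorem stmt7 {d : ℕ} (T : DTree d) (hT : T.valid (unitBox d)) :
    ∀ B : Set (Fin d → ℝ), MeasurableSet B → B ⊆ (unitBox d).set →
      treeMeasure T (unitBox d) B = volume (treeCDF T (unitBox d) '' B) := by
  intro B hB hBsub
  have hunit : volume (unitBox d).set = 1 := by simp [Box.volume_set, unitBox]
  rw [(DTree.volume_image_treeCDF T _ hT B hB hBsub).2, hunit, one_mul]
end

section
/- Let p, q₀ ∈ (0,1) and c ∈ (0,1], and define q_c = (1−c)q₀ + c·p. Then p·log(q_c/q₀) + (1−p)·log((1−q_c)/(1−q₀)) ≥ c·[p log(p/q₀) + (1−p) log((1−p)/(1−q₀))] ≥ 0, with the right-hand quantity strictly positive unless p = q₀. -/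
/-!
Both inequalities are instances of convexity. Concavity of `log` at the point
`q_c = (1 - c) q₀ + c p` gives `log (q_c / q₀) ≥ c log (p / q₀)`, and likewise for the
complementary masses `1 - q_c = (1 - c)(1 - q₀) + c (1 - p)`; weighting by `p` and `1 - p`
yields the first bound. For the second, the Bernoulli divergence equals
`q₀ φ(p / q₀) + (1 - q₀) φ((1 - p) / (1 - q₀))` with `φ x = x log x + 1 - x`, which is
nonnegative and vanishes only at `x = 1`.
-/

open Set Real InformationTheory

noncomputable def binaryKL (p q : ℝ) : ℝ :=
  p * log (p / q) + (1 - p) * log ((1 - p) / (1 - q))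

lemma mul_log_div_le_log_convex_comb_div {a b c : ℝ} (ha : 0 < a) (hb : 0 < b)
    (hc : c ∈ Icc (0 : ℝ) 1) :
    c * log (a / b) ≤ log (((1 - c) * b + c * a) / b) := by
  obtain ⟨hc0, hc1⟩ := hc
  have hconc : (1 - c) * log b + c * log a ≤ log ((1 - c) * b + c * a) :=
    strictConcaveOn_log_Ioi.concaveOn.2 hb ha (by linarith) hc0 (by ring)
  have hmix : 0 < (1 - c) * b + c * a := by
    rcases hc0.eq_or_lt with rfl | hc0
    · simpa using hb
    · nlinarith
  rw [log_div ha.ne' hb.ne', log_div hmix.ne' hb.ne']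
  linarith

lemma binaryKL_eq_klFun {p q : ℝ} (hq0 : q ≠ 0) (hq1 : q ≠ 1) :
    binaryKL p q = q * klFun (p / q) + (1 - q) * klFun ((1 - p) / (1 - q)) := by
  have hq1' : 1 - q ≠ 0 := sub_ne_zero.2 hq1.symm
  simp only [binaryKL, klFun_apply]
  field_simp
  ring

lemma binaryKL_nonneg {p q : ℝ} (hp : p ∈ Icc (0 : ℝ) 1) (hq : q ∈ Ioo (0 : ℝ) 1) :
    0 ≤ binaryKL p q := by
  obtain ⟨hp0, hp1⟩ := hp
  obtain ⟨hq0, hq1⟩ := hq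
  rw [binaryKL_eq_klFun hq0.ne' hq1.ne]
  have h₁ := klFun_nonneg (div_nonneg hp0 hq0.le)
  have h₂ := klFun_nonneg (div_nonneg (sub_nonneg.2 hp1) (sub_pos.2 hq1).le)
  nlinarith

lemma binaryKL_pos {p q : ℝ} (hp : p ∈ Icc (0 : ℝ) 1) (hq : q ∈ Ioo (0 : ℝ) 1)
    (hpq : p ≠ q) : 0 < binaryKL p q := by
  obtain ⟨hp0, hp1⟩ := hp
  obtain ⟨hq0, hq1⟩ := hq
  rw [binaryKL_eq_klFun hq0.ne' hq1.ne]
  have hx : 0 ≤ p / q := div_nonneg hp0 hq0.le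
  have h₁ : 0 < klFun (p / q) :=
    (klFun_nonneg hx).lt_of_ne fun h ↦ hpq <| (div_eq_one_iff_eq hq0.ne').1 <|
      (klFun_eq_zero_iff hx).1 h.symm
  have h₂ := klFun_nonneg (div_nonneg (sub_nonneg.2 hp1) (sub_pos.2 hq1).le)
  nlinarith

lemma mul_binaryKL_le {p q c : ℝ} (hp : p ∈ Ioo (0 : ℝ) 1) (hq : q ∈ Ioo (0 : ℝ) 1)
    (hc : c ∈ Icc (0 : ℝ) 1) :
    c * binaryKL p q ≤
      p * log (((1 - c) * q + c * p) / q) +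
        (1 - p) * log ((1 - ((1 - c) * q + c * p)) / (1 - q)) := by
  obtain ⟨hp0, hp1⟩ := hp
  obtain ⟨hq0, hq1⟩ := hq
  have h₁ := mul_log_div_le_log_convex_comb_div hp0 hq0 hc
  have h₂ := mul_log_div_le_log_convex_comb_div (sub_pos.2 hp1) (sub_pos.2 hq1) hc
  have hcompl : 1 - ((1 - c) * q + c * p) = (1 - c) * (1 - q) + c * (1 - p) := by ring
  rw [hcompl]
  unfold binaryKL
  nlinarith [mul_le_mul_of_nonneg_left h₁ hp0.le,
    mul_le_mul_of_nonneg_left h₂ (sub_pos.2 hp1).le]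

/-- single-node shrinkage improvement bound.  For `p, q₀ ∈ (0,1)`,
`c ∈ (0,1]` and `q_c = (1−c)q₀ + c·p`:
`p log(q_c/q₀) + (1−p) log((1−q_c)/(1−q₀)) ≥ c·KL(p‖q₀) ≥ 0`, where
`KL(p‖q₀) = p log(p/q₀) + (1−p) log((1−p)/(1−q₀))`, and `c·KL(p‖q₀) > 0` unless
`p = q₀`. -/
theorem stmt13
    (p q₀ c qc : ℝ) (hp : p ∈ Ioo (0:ℝ) 1) (hq : q₀ ∈ Ioo (0:ℝ) 1)
    (hc : c ∈ Ioc (0:ℝ) 1) (hqc : qc = (1 - c) * q₀ + c * p) :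
    c * (p * Real.log (p / q₀) + (1 - p) * Real.log ((1 - p) / (1 - q₀))) ≤
        p * Real.log (qc / q₀) + (1 - p) * Real.log ((1 - qc) / (1 - q₀)) ∧
      0 ≤ c * (p * Real.log (p / q₀) + (1 - p) * Real.log ((1 - p) / (1 - q₀))) ∧
      (p ≠ q₀ →
        0 < c * (p * Real.log (p / q₀) + (1 - p) * Real.log ((1 - p) / (1 - q₀)))) := by
  subst hqc
  have hp' : p ∈ Icc (0 : ℝ) 1 := Ioo_subset_Icc_self hp
  exact ⟨mul_binaryKL_le hp hq (Ioc_subset_Icc_self hc),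
    mul_nonneg hc.1.le (binaryKL_nonneg hp' hq),
    fun hpq ↦ mul_pos hc.1 (binaryKL_pos hp' hq hpq)⟩
end

section
/- Let F be a probability measure on (0,1] with piecewise constant density f(x) = ∑_{i=1}^{I} β_i 1_{(c_{i−1}, c_i]}(x), where β_i > 0 and 0 = c₀ < c₁ < ⋯ < c_I = 1. Then there exist finitely many probability measures G₁,…,G_{I−1}, each piecewise uniform on a two-leaf dyadic tree (i.e., each G_k has density taking exactly two positive constant values on an interval partition (0,s_k], (s_k,1]), whose CDFs 𝐆₁,…,𝐆_{I−1} satisfy: the pushforward of F under 𝐆_{I−1} ∘ ⋯ ∘ 𝐆₁ is the uniform distribution on (0,1]. -/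
open MeasureTheory Set

/-- `compFrom F i n = F (i+n-1) ∘ ⋯ ∘ F (i+1) ∘ F i` (and the identity when `n = 0`). -/
def compFrom {α : Type*} (F : ℕ → α → α) (i : ℕ) : ℕ → α → α
  | 0 => id
  | n + 1 => F (i + n) ∘ compFrom F i n

/-!
The CDF `Φ` of `F` is an increasing piecewise affine bijection of `[0, 1]` with knots `c i` and
slopes `β i`. If `G` is the two-leaf CDF split at `c 1` whose two slopes are in the ratio
`β 0 : β 1`, then `Φ = Φ' ∘ G` where `Φ'` is piecewise affine with one piece fewer (the first two
pieces of `Φ` are straightened into one), so by induction `Φ` is, on `[0, 1]`, a composition `h` of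
`I - 1` two-leaf CDFs. Each two-leaf CDF is an increasing bijection of `ℝ` (its inverse is the
two-leaf CDF with split and mass exchanged), hence so is `h`, and
`F (h⁻¹ (-∞, t]) = F (-∞, h⁻¹ t] = Φ (h⁻¹ t)` is `t` clamped to `[0, 1]`: `h` pushes `F` to the
uniform law.
-/

noncomputable def twoLeafCDF (s a x : ℝ) : ℝ :=
  if x ≤ s then a / s * x else a + (1 - a) / (1 - s) * (x - s)

section twoLeafCDF

variable {s a : ℝ}

theorem twoLeafCDF_of_le {x : ℝ} (hx : x ≤ s) : twoLeafCDF s a x = a / s * x := if_pos hx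

theorem twoLeafCDF_of_ge (hs : s ≠ 0) {x : ℝ} (hx : s ≤ x) :
    twoLeafCDF s a x = a + (1 - a) / (1 - s) * (x - s) := by
  rcases hx.eq_or_lt with rfl | hx
  · rw [twoLeafCDF_of_le le_rfl, div_mul_cancel₀ _ hs]; ring
  · exact if_neg hx.not_ge

theorem twoLeafCDF_zero (hs : 0 ≤ s) : twoLeafCDF s a 0 = 0 := by
  rw [twoLeafCDF_of_le hs, mul_zero]

theorem twoLeafCDF_one (hs : s ∈ Ioo 0 1) : twoLeafCDF s a 1 = 1 := by
  have : 1 - s ≠ 0 := by linarith [hs.2]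
  rw [twoLeafCDF_of_ge hs.1.ne' hs.2.le]; field_simp; ring

theorem twoLeafCDF_strictMono (hs : s ∈ Ioo 0 1) (ha : a ∈ Ioo 0 1) :
    StrictMono (twoLeafCDF s a) := by
  obtain ⟨hs0, hs1⟩ := hs
  obtain ⟨ha0, ha1⟩ := ha
  have hl : 0 < a / s := div_pos ha0 hs0
  have hr : 0 < (1 - a) / (1 - s) := div_pos (by linarith) (by linarith)
  intro x y hxy
  rcases le_total y s with hy | hy
  · rw [twoLeafCDF_of_le hy, twoLeafCDF_of_le (hxy.le.trans hy)]
    exact mul_lt_mul_of_pos_left hxy hl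
  rw [twoLeafCDF_of_ge hs0.ne' hy]
  rcases le_total x s with hx | hx
  · rw [twoLeafCDF_of_le hx]
    have has : a / s * s = a := div_mul_cancel₀ _ hs0.ne'
    rcases hx.lt_or_eq with hx | rfl
    · nlinarith [mul_lt_mul_of_pos_left hx hl, mul_nonneg hr.le (sub_nonneg.2 hy)]
    · nlinarith [mul_pos hr (sub_pos.2 hxy)]
  · rw [twoLeafCDF_of_ge hs0.ne' hx]; nlinarith

theorem twoLeafCDF_leftInverse (hs : s ∈ Ioo 0 1) (ha : a ∈ Ioo 0 1) :
    Function.LeftInverse (twoLeafCDF a s) (twoLeafCDF s a) := by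
  intro x
  have hs1 : 1 - s ≠ 0 := by linarith [hs.2]
  have ha1 : 1 - a ≠ 0 := by linarith [ha.2]
  rcases le_total x s with hx | hx
  · have hG : twoLeafCDF s a x ≤ a := by
      simpa [twoLeafCDF_of_le le_rfl, div_mul_cancel₀ _ hs.1.ne'] using
        (twoLeafCDF_strictMono hs ha).monotone hx
    rw [twoLeafCDF_of_le hG, twoLeafCDF_of_le hx]; field_simp [ha.1.ne', hs.1.ne']
  · have hG : a ≤ twoLeafCDF s a x := by
      simpa [twoLeafCDF_of_le le_rfl, div_mul_cancel₀ _ hs.1.ne'] using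
        (twoLeafCDF_strictMono hs ha).monotone hx
    rw [twoLeafCDF_of_ge ha.1.ne' hG, twoLeafCDF_of_ge hs.1.ne' hx]; field_simp; ring

theorem twoLeafCDF_mapsTo (hs : s ∈ Ioo 0 1) (ha : a ∈ Ioo 0 1) :
    MapsTo (twoLeafCDF s a) (Icc 0 1) (Icc 0 1) := fun _ hx => by
  have hG := (twoLeafCDF_strictMono hs ha).monotone
  rw [← twoLeafCDF_zero hs.1.le (a := a), ← twoLeafCDF_one hs (a := a)]
  exact ⟨hG hx.1, hG hx.2⟩

theorem exists_twoLeafCDF_slope_ratio (hs : s ∈ Ioo 0 1) {p q : ℝ} (hp : 0 < p) (hq : 0 < q) :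
    ∃ a ∈ Ioo (0 : ℝ) 1, p * ((1 - a) / (1 - s)) = q * (a / s) := by
  obtain ⟨hs0, hs1⟩ := hs
  have hD : 0 < p * s + q * (1 - s) := by nlinarith
  refine ⟨p * s / (p * s + q * (1 - s)), ⟨by positivity, ?_⟩, ?_⟩
  · rw [div_lt_one hD]; nlinarith
  · have : 1 - s ≠ 0 := by linarith
    field_simp; ring

end twoLeafCDF

section compFrom

variable {α : Type*} {F : ℕ → α → α}

theorem compFrom_succ' (i n : ℕ) :
    compFrom F i (n + 1) = compFrom (fun k => F (k + 1)) i n ∘ F i := by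
  induction n with
  | zero => rfl
  | succ n ih => rw [compFrom, ih]; rfl

theorem compFrom_strictMono [Preorder α] (hF : ∀ k, StrictMono (F k)) (i n : ℕ) :
    StrictMono (compFrom F i n) := by
  induction n with
  | zero => exact strictMono_id
  | succ n ih => exact (hF _).comp ih

theorem compFrom_surjective (hF : ∀ k, Function.Surjective (F k)) (i n : ℕ) :
    Function.Surjective (compFrom F i n) := by
  induction n with
  | zero => exact Function.surjective_id
  | succ n ih => exact (hF _).comp ih

end compFrom

theorem Monotone.min_sub_min_of_affineOn {G : ℝ → ℝ} (hG : Monotone G) {u v k : ℝ}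
    (huv : u ≤ v) (hGuv : ∀ y ∈ Icc u v, G y = G u + k * (y - u)) (x : ℝ) :
    min (G x) (G v) - min (G x) (G u) = k * (min x v - min x u) := by
  rw [← hG.map_min, ← hG.map_min]
  rcases le_total x u with hx | hx
  · rw [min_eq_left hx, min_eq_left (hx.trans huv)]; ring
  · rw [min_eq_right hx, hGuv _ ⟨le_min hx huv, min_le_right _ _⟩]; ring

noncomputable def stepCDF (I : ℕ) (c β : ℕ → ℝ) (x : ℝ) : ℝ :=
  ∑ i ∈ Finset.range I, β i * (min x (c (i + 1)) - min x (c i))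

section stepCDF

variable {I : ℕ} {c β : ℕ → ℝ}

theorem stepCDF_eq_zero {x : ℝ} (hx : ∀ i ≤ I, x ≤ c i) : stepCDF I c β x = 0 := by
  refine Finset.sum_eq_zero fun i hi => ?_
  have hi := Finset.mem_range.1 hi
  rw [min_eq_left (hx i hi.le), min_eq_left (hx (i + 1) hi), sub_self, mul_zero]

theorem stepCDF_eq_sum {x : ℝ} (hx : ∀ i ≤ I, c i ≤ x) :
    stepCDF I c β x = ∑ i ∈ Finset.range I, β i * (c (i + 1) - c i) := by
  refine Finset.sum_congr rfl fun i hi => ?_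
  have hi := Finset.mem_range.1 hi
  rw [min_eq_right (hx i hi.le), min_eq_right (hx (i + 1) hi)]

end stepCDF

noncomputable def mergedKnots (c : ℕ → ℝ) (a : ℝ) : ℕ → ℝ
  | 0 => twoLeafCDF (c 1) a (c 0)
  | i + 1 => twoLeafCDF (c 1) a (c (i + 2))

noncomputable def mergedSlopes (c β : ℕ → ℝ) (a : ℝ) : ℕ → ℝ
  | 0 => β 0 / (a / c 1)
  | i + 1 => β (i + 2) / ((1 - a) / (1 - c 1))

/-- `hratio` makes the two slopes of `twoLeafCDF (c 1) a` proportional to `β 0` and `β 1`, so after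
this change of variable the first two pieces of `stepCDF` have the same slope
`β 0 / (a / c 1) = β 1 / ((1 - a) / (1 - c 1))` and merge into one. -/
theorem stepCDF_succ_succ {m : ℕ} {c β : ℕ → ℝ} {a : ℝ} (hc : ∀ i < m + 2, c i < c (i + 1))
    (hs : c 1 ∈ Ioo 0 1) (ha : a ∈ Ioo 0 1)
    (hratio : β 0 * ((1 - a) / (1 - c 1)) = β 1 * (a / c 1)) (x : ℝ) :
    stepCDF (m + 2) c β x =
      stepCDF (m + 1) (mergedKnots c a) (mergedSlopes c β a) (twoLeafCDF (c 1) a x) := by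
  set G := twoLeafCDF (c 1) a
  have hG : Monotone G := (twoLeafCDF_strictMono hs ha).monotone
  have hcmono : StrictMonoOn c (Iic (m + 2)) := strictMonoOn_Iic_of_lt_succ fun i hi => hc i hi
  have hl : a / c 1 ≠ 0 := (div_pos ha.1 hs.1).ne'
  have hr : (1 - a) / (1 - c 1) ≠ 0 := (div_pos (by linarith [ha.2]) (by linarith [hs.2])).ne'
  have piece0 : min (G x) (G (c 1)) - min (G x) (G (c 0)) =
      a / c 1 * (min x (c 1) - min x (c 0)) := by
    refine hG.min_sub_min_of_affineOn (hc 0 (by omega)).le (fun y hy => ?_) x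
    simp only [G]
    rw [twoLeafCDF_of_le hy.2, twoLeafCDF_of_le (hy.1.trans hy.2)]; ring
  have piece : ∀ i, 1 ≤ i → i < m + 2 → min (G x) (G (c (i + 1))) - min (G x) (G (c i)) =
      (1 - a) / (1 - c 1) * (min x (c (i + 1)) - min x (c i)) := by
    intro i hi1 hi
    have h1i : c 1 ≤ c i :=
      hcmono.monotoneOn (by simp only [mem_Iic]; omega) (by simp only [mem_Iic]; omega) hi1
    refine hG.min_sub_min_of_affineOn (hc i hi).le (fun y hy => ?_) x
    simp only [G]
    rw [twoLeafCDF_of_ge hs.1.ne' (h1i.trans hy.1), twoLeafCDF_of_ge hs.1.ne' h1i]; ring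
  simp only [stepCDF, Finset.sum_range_succ' _ (m + 1), Finset.sum_range_succ' _ m]
  rw [add_assoc]
  congr 1
  · refine Finset.sum_congr rfl fun i hi => ?_
    have := piece (i + 2) (by omega) (by simp at hi; omega)
    simp only [mergedKnots, mergedSlopes]
    rw [this, ← mul_assoc, div_mul_cancel₀ _ hr]
  · have hhead : min (G x) (G (c 2)) - min (G x) (G (c 0)) =
        (1 - a) / (1 - c 1) * (min x (c 2) - min x (c 1)) +
          a / c 1 * (min x (c 1) - min x (c 0)) := by
      linarith [piece 1 le_rfl (by omega)]
    simp only [mergedKnots, mergedSlopes, zero_add, Nat.reduceAdd]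
    rw [hhead, mul_add, ← mul_assoc, ← mul_assoc, div_mul_cancel₀ _ hl, div_mul_eq_mul_div,
      hratio, mul_div_cancel_right₀ _ hl]

theorem exists_compFrom_twoLeafCDF_eqOn_stepCDF (m : ℕ) {c β : ℕ → ℝ} (hc0 : c 0 = 0)
    (hc1 : c (m + 1) = 1) (hc : ∀ i < m + 1, c i < c (i + 1)) (hβ : ∀ i < m + 1, 0 < β i)
    (hmass : stepCDF (m + 1) c β 1 = 1) :
    ∃ s a : ℕ → ℝ, (∀ k, s k ∈ Ioo 0 1 ∧ a k ∈ Ioo 0 1) ∧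
      EqOn (compFrom (fun k => twoLeafCDF (s k) (a k)) 0 m) (stepCDF (m + 1) c β) (Icc 0 1) := by
  induction m generalizing c β with
  | zero =>
    have hstep : ∀ x, stepCDF 1 c β x = β 0 * (min x 1 - min x 0) := by
      simp [stepCDF, hc0, hc1]
    have hβ0 : β 0 = 1 := by simpa [hstep] using hmass
    refine ⟨fun _ => 1 / 2, fun _ => 1 / 2, fun _ => ⟨by norm_num, by norm_num⟩, fun x hx => ?_⟩
    rw [hstep, hβ0, min_eq_left hx.2, min_eq_right hx.1]
    simp [compFrom]
  | succ m ih =>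
    have hcmono : StrictMonoOn c (Iic (m + 2)) := strictMonoOn_Iic_of_lt_succ fun i hi => hc i hi
    have hs : c 1 ∈ Ioo 0 1 :=
      ⟨hc0 ▸ hc 0 (by omega), hc1 ▸ hcmono (by simp) (by simp) (by omega)⟩
    obtain ⟨a, ha, hratio⟩ := exists_twoLeafCDF_slope_ratio hs (hβ 0 (by omega)) (hβ 1 (by omega))
    have hG := twoLeafCDF_strictMono hs ha
    have hmerge := stepCDF_succ_succ hc hs ha hratio
    obtain ⟨s, a', hsa, heq⟩ := ih (c := mergedKnots c a) (β := mergedSlopes c β a)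
      (by simp [mergedKnots, hc0, twoLeafCDF_zero hs.1.le])
      (by simp [mergedKnots, hc1, twoLeafCDF_one hs])
      (fun
        | 0, _ => hG (hcmono (by simp) (by simp) (by omega))
        | i + 1, hi => hG (hc (i + 2) (by omega)))
      (fun
        | 0, _ => div_pos (hβ 0 (by omega)) (div_pos ha.1 hs.1)
        | i + 1, hi => div_pos (hβ (i + 2) (by omega))
            (div_pos (by linarith [ha.2]) (by linarith [hs.2])))
      (by simpa [twoLeafCDF_one hs, hmass] using (hmerge 1).symm)
    refine ⟨fun | 0 => c 1 | k + 1 => s k, fun | 0 => a | k + 1 => a' k,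
      fun | 0 => ⟨hs, ha⟩ | k + 1 => hsa k, fun x hx => ?_⟩
    rw [compFrom_succ', Function.comp_apply, hmerge]
    exact heq (twoLeafCDF_mapsTo hs ha hx)

theorem withDensity_sum_indicator_const_apply {α ι : Type*} [MeasurableSpace α] {μ : Measure α}
    (t : Finset ι) {A : ι → Set α} (hA : ∀ i, MeasurableSet (A i)) (r : ι → ENNReal) {S : Set α}
    (hS : MeasurableSet S) :
    μ.withDensity (fun x => ∑ i ∈ t, (A i).indicator (fun _ => r i) x) S =
      ∑ i ∈ t, r i * μ (A i ∩ S) := by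
  rw [withDensity_apply _ hS,
    lintegral_finsetSum _ fun i _ => measurable_const.indicator (hA i)]
  refine Finset.sum_congr rfl fun i _ => ?_
  rw [lintegral_indicator_const (hA i), Measure.restrict_apply (hA i)]

theorem withDensity_sum_indicator_const_apply_of_subset {α ι : Type*} [MeasurableSpace α]
    {μ : Measure α} (t : Finset ι) {A : ι → Set α} (hA : ∀ i, MeasurableSet (A i))
    (r : ι → ENNReal) {S : Set α} (hS : MeasurableSet S) (hAS : ∀ i ∈ t, A i ⊆ S) :
    μ.withDensity (fun x => ∑ i ∈ t, (A i).indicator (fun _ => r i) x) S =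
      μ.withDensity (fun x => ∑ i ∈ t, (A i).indicator (fun _ => r i) x) univ := by
  rw [withDensity_sum_indicator_const_apply t hA r hS,
    withDensity_sum_indicator_const_apply t hA r MeasurableSet.univ]
  refine Finset.sum_congr rfl fun i hi => ?_
  rw [inter_univ, inter_eq_left.2 (hAS i hi)]

theorem volume_Ioc_inter_Iic {a b : ℝ} (hab : a ≤ b) (x : ℝ) :
    volume (Ioc a b ∩ Iic x) = ENNReal.ofReal (min x b - min x a) := by
  rw [Ioc_inter_Iic, Real.volume_Ioc]
  rcases le_total x a with hx | hx
  · rw [min_eq_left hx, min_eq_left (hx.trans hab), sub_self, ENNReal.ofReal_zero,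
      ENNReal.ofReal_eq_zero]
    linarith [min_le_right b x]
  · rw [min_eq_right hx, min_comm]

theorem withDensity_sum_indicator_Ioc_apply_Iic {I : ℕ} {c β : ℕ → ℝ}
    (hc : ∀ i < I, c i ≤ c (i + 1)) (hβ : ∀ i < I, 0 ≤ β i) (x : ℝ) :
    volume.withDensity (fun y => ∑ i ∈ Finset.range I,
        (Ioc (c i) (c (i + 1))).indicator (fun _ => ENNReal.ofReal (β i)) y) (Iic x) =
      ENNReal.ofReal (stepCDF I c β x) := by
  rw [withDensity_sum_indicator_const_apply _ (fun _ => measurableSet_Ioc) _ measurableSet_Iic,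
    stepCDF, ENNReal.ofReal_sum_of_nonneg]
  · refine Finset.sum_congr rfl fun i hi => ?_
    have hi := Finset.mem_range.1 hi
    rw [volume_Ioc_inter_Iic (hc i hi), ENNReal.ofReal_mul (hβ i hi)]
  · intro i hi
    have hi := Finset.mem_range.1 hi
    exact mul_nonneg (hβ i hi) (sub_nonneg.2 (min_le_min_left x (hc i hi)))

theorem map_eq_volume_restrict_Ioc_of_measure_Iic {μ : Measure ℝ} [IsFiniteMeasure μ]
    {h : ℝ → ℝ} (hmono : StrictMono h) (hsurj : Function.Surjective h)
    (hμ : ∀ y, μ (Iic y) = ENNReal.ofReal (min (h y) 1)) :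
    μ.map h = volume.restrict (Ioc 0 1) := by
  refine Measure.ext_of_Iic _ _ fun t => ?_
  obtain ⟨y, rfl⟩ := hsurj t
  have hpre : h ⁻¹' Iic (h y) = Iic y := by ext; simp [hmono.le_iff_le]
  rw [Measure.map_apply hmono.monotone.measurable measurableSet_Iic, hpre, hμ,
    Measure.restrict_apply measurableSet_Iic, inter_comm, Ioc_inter_Iic, Real.volume_Ioc,
    sub_zero, min_comm]

theorem ofReal_stepCDF_eq_ofReal_min {I : ℕ} {c β : ℕ → ℝ} (hc : ∀ i ≤ I, c i ∈ Icc 0 1)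
    (hmass : stepCDF I c β 1 = 1) {h : ℝ → ℝ} (hh : Monotone h)
    (hhΦ : EqOn h (stepCDF I c β) (Icc 0 1)) (y : ℝ) :
    ENNReal.ofReal (stepCDF I c β y) = ENNReal.ofReal (min (h y) 1) := by
  have hh0 : h 0 = 0 := (hhΦ ⟨le_rfl, zero_le_one⟩).trans (stepCDF_eq_zero fun i hi => (hc i hi).1)
  have hh1 : h 1 = 1 := (hhΦ ⟨zero_le_one, le_rfl⟩).trans hmass
  rcases le_total y 0 with hy | hy
  · rw [stepCDF_eq_zero fun i hi => hy.trans (hc i hi).1, ENNReal.ofReal_zero, eq_comm,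
      ENNReal.ofReal_eq_zero]
    exact (min_le_left _ _).trans (hh0 ▸ hh hy)
  rcases le_total y 1 with hy1 | hy1
  · rw [← hhΦ ⟨hy, hy1⟩, min_eq_left (hh1 ▸ hh hy1)]
  · rw [stepCDF_eq_sum fun i hi => (hc i hi).2.trans hy1, ← stepCDF_eq_sum fun i hi => (hc i hi).2,
      hmass, min_eq_right (hh1 ▸ hh hy1)]

/-- Let `F` be a probability measure on `(0,1]` with piecewise constant
density `f = ∑_{i<I} β i · 1_{(c i, c (i+1)]}`, with `β i > 0` and
`0 = c 0 < c 1 < ⋯ < c I = 1`.  Then there exist `I − 1` two-leaf tree measures — each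
determined by a split point `s k ∈ (0,1)` and a left mass `a k ∈ (0,1)`, with piecewise
affine CDF of slopes `a k / s k` on `(0, s k]` and `(1 − a k)/(1 − s k)` on `(s k, 1]` —
such that the pushforward of `F` under the composition `𝐆_{I−1} ∘ ⋯ ∘ 𝐆₁` of their CDFs
is the uniform distribution on `(0,1]`. -/
theorem stmt15
    (I : ℕ) (c : ℕ → ℝ) (β : ℕ → ℝ)
    (hc0 : c 0 = 0) (hcI : c I = 1) (hcmono : ∀ i < I, c i < c (i + 1))
    (hβ : ∀ i < I, 0 < β i)
    (F : Measure ℝ) [IsProbabilityMeasure F]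
    (hF : F = volume.withDensity fun x =>
      ∑ i ∈ Finset.range I,
        Set.indicator (Ioc (c i) (c (i + 1))) (fun _ => ENNReal.ofReal (β i)) x) :
    ∃ s a : ℕ → ℝ,
      (∀ k < I - 1, s k ∈ Ioo (0:ℝ) 1 ∧ a k ∈ Ioo (0:ℝ) 1) ∧
      Measure.map
        (compFrom
          (fun k x => if x ≤ s k then a k / s k * x
            else a k + (1 - a k) / (1 - s k) * (x - s k))
          0 (I - 1)) F
        = volume.restrict (Ioc (0:ℝ) 1) := by
  obtain ⟨m, rfl⟩ : ∃ m, I = m + 1 :=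
    Nat.exists_eq_succ_of_ne_zero fun hI => by simp [hI, hc0] at hcI
  have hcIcc : ∀ i ≤ m + 1, c i ∈ Icc 0 1 := fun i hi => by
    have hc := (strictMonoOn_Iic_of_lt_succ fun i hi => hcmono i hi).monotoneOn
    exact ⟨hc0 ▸ hc (by simp) hi (Nat.zero_le i), hcI ▸ hc hi (by simp) hi⟩
  have hFIic : ∀ x, F (Iic x) = ENNReal.ofReal (stepCDF (m + 1) c β x) := hF ▸
    withDensity_sum_indicator_Ioc_apply_Iic (fun i hi => (hcmono i hi).le)
      (fun i hi => (hβ i hi).le)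
  have hIic : F (Iic 1) = F univ := hF ▸
    withDensity_sum_indicator_const_apply_of_subset _ (fun _ => measurableSet_Ioc) _
      measurableSet_Iic fun i hi => Ioc_subset_Iic_self.trans
        (Iic_subset_Iic.2 (hcIcc (i + 1) (Finset.mem_range.1 hi)).2)
  have hmass : stepCDF (m + 1) c β 1 = 1 := by
    rw [← ENNReal.ofReal_eq_one, ← hFIic, hIic, measure_univ]
  obtain ⟨s, a, hsa, hΦ⟩ := exists_compFrom_twoLeafCDF_eqOn_stepCDF m hc0 hcI hcmono hβ hmass
  have hmono := compFrom_strictMono (fun k => twoLeafCDF_strictMono (hsa k).1 (hsa k).2) 0 m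
  have hsurj := compFrom_surjective
    (fun k => (twoLeafCDF_leftInverse (hsa k).2 (hsa k).1).surjective) 0 m
  refine ⟨s, a, fun k _ => hsa k, map_eq_volume_restrict_Ioc_of_measure_Iic hmono hsurj
    fun y => ?_⟩
  rw [hFIic, ofReal_stepCDF_eq_ofReal_min hcIcc hmass hmono.monotone hΦ]
  rfl
end

section
/- Let F* be a probability measure on (0,1]^d with a uniformly continuous density f*. Then for every ε > 0, there exists a probability measure G with piecewise constant density on a finite partition of (0,1]^d into axis-aligned rectangles, with strictly positive density pieces, such that KL(F* ‖ G) < ε. -/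
/-!
Cut `(0,1]^d` into a grid of cubes of side `1/N`, so fine that `f` oscillates by less than
`δ = ε/4` on each cube `R i`, and let `a i = f (c i) + δ` with `c i` a corner of `R i`. Then
`f ≤ a i` on `R i`, and the step function `g = a i / C` on `R i`, normalised by
`C = ∑ a i |R i| ≤ ∫ f + 2δ = 1 + 2δ`, is a positive probability density with `f ≤ C g`.
Hence `f log (f / g) ≤ f log C` pointwise, and `KL(F*‖G) ≤ log C ≤ C - 1 ≤ 2δ < ε`.
-/

open MeasureTheory Set Function

section StepFunction

variable {α ι : Type*} [Fintype ι]

noncomputable def stepFunction (R : ι → Set α) (v : ι → ℝ) (x : α) : ℝ :=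
  ∑ i, (R i).indicator (fun _ => v i) x

lemma stepFunction_eq_of_mem {R : ι → Set α} (hR : Pairwise (Disjoint on R)) (v : ι → ℝ)
    {i : ι} {x : α} (hx : x ∈ R i) : stepFunction R v x = v i := by
  rw [stepFunction, Finset.sum_eq_single_of_mem i (Finset.mem_univ i)]
  · exact indicator_of_mem hx _
  · intro j _ hji
    exact indicator_of_notMem (fun hxj => disjoint_left.1 (hR hji) hxj hx) _

variable [MeasurableSpace α] {μ : Measure α} {s : Set α} {R : ι → Set α} {v : ι → ℝ}

lemma setLIntegral_ofReal_stepFunction (hRm : ∀ i, MeasurableSet (R i)) (hRs : ∀ i, R i ⊆ s)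
    (hv : ∀ i, 0 ≤ v i) :
    ∫⁻ x in s, ENNReal.ofReal (stepFunction R v x) ∂μ = ∑ i, ENNReal.ofReal (v i) * μ (R i) := by
  have hpt : ∀ x, ENNReal.ofReal (stepFunction R v x)
      = ∑ i, (R i).indicator (fun _ => ENNReal.ofReal (v i)) x := by
    intro x
    rw [stepFunction, ENNReal.ofReal_sum_of_nonneg fun i _ => indicator_nonneg (fun _ _ => hv i) x]
    refine Finset.sum_congr rfl fun i _ => ?_
    rw [← Function.comp_apply (f := ENNReal.ofReal), ← indicator_comp_of_zero ENNReal.ofReal_zero]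
    rfl
  simp_rw [hpt]
  rw [lintegral_finsetSum _ fun i _ => measurable_const.indicator (hRm i)]
  refine Finset.sum_congr rfl fun i _ => ?_
  rw [lintegral_indicator_const (hRm i), Measure.restrict_apply (hRm i),
    inter_eq_self_of_subset_left (hRs i)]

lemma isProbabilityMeasure_withDensity_stepFunction (hRm : ∀ i, MeasurableSet (R i))
    (hRs : ∀ i, R i ⊆ s) (hRfin : ∀ i, μ (R i) ≠ ⊤) (hv : ∀ i, 0 ≤ v i)
    (hv1 : ∑ i, v i * μ.real (R i) = 1) :
    IsProbabilityMeasure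
      ((μ.restrict s).withDensity fun x => ENNReal.ofReal (stepFunction R v x)) := by
  constructor
  rw [withDensity_apply _ MeasurableSet.univ, Measure.restrict_univ,
    setLIntegral_ofReal_stepFunction hRm hRs hv, ← ENNReal.ofReal_one, ← hv1,
    ENNReal.ofReal_sum_of_nonneg fun i _ => mul_nonneg (hv i) measureReal_nonneg]
  refine Finset.sum_congr rfl fun i _ => ?_
  rw [ENNReal.ofReal_mul (hv i), ofReal_measureReal (hRfin i)]

end StepFunction

section Integrals

variable {α ι : Type*} [MeasurableSpace α] {μ : Measure α} {s : Set α}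

lemma sum_mul_measureReal_le_setIntegral [Fintype ι] {R : ι → Set α} {f : α → ℝ} {b : ι → ℝ}
    (hRm : ∀ i, MeasurableSet (R i)) (hR : Pairwise (Disjoint on R)) (hRfin : ∀ i, μ (R i) ≠ ⊤)
    (hf : IntegrableOn f (⋃ i, R i) μ) (hb : ∀ i, ∀ x ∈ R i, b i ≤ f x) :
    ∑ i, b i * μ.real (R i) ≤ ∫ x in ⋃ i, R i, f x ∂μ := by
  rw [integral_iUnion_fintype hRm hR fun i => hf.mono_set (subset_iUnion R i)]
  gcongr with i
  calc b i * μ.real (R i) = ∫ _ in R i, b i ∂μ := by rw [setIntegral_const, smul_eq_mul, mul_comm]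
    _ ≤ ∫ x in R i, f x ∂μ :=
      setIntegral_mono_on (integrableOn_const (hRfin i)) (hf.mono_set (subset_iUnion R i))
        (hRm i) (hb i)

lemma mul_log_div_le_mul_log {a b C : ℝ} (ha : 0 ≤ a) (hb : 0 < b) (hab : a ≤ C * b) :
    a * Real.log (a / b) ≤ a * Real.log C := by
  rcases ha.eq_or_lt with rfl | ha
  · simp
  · gcongr
    rwa [div_le_iff₀ hb]

lemma setIntegral_mul_log_div_lt {f g : α → ℝ} {C ε : ℝ} (hs : MeasurableSet s)
    (hf0 : ∀ x ∈ s, 0 ≤ f x) (hf : IntegrableOn f s μ) (hf1 : ∫ x in s, f x ∂μ = 1)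
    (hg : ∀ x ∈ s, 0 < g x) (hfg : ∀ x ∈ s, f x ≤ C * g x) (hε : 0 < ε)
    (hC : Real.log C < ε) :
    ∫ x in s, f x * Real.log (f x / g x) ∂μ < ε := by
  by_cases hint : IntegrableOn (fun x => f x * Real.log (f x / g x)) s μ
  · calc ∫ x in s, f x * Real.log (f x / g x) ∂μ ≤ ∫ x in s, f x * Real.log C ∂μ :=
          setIntegral_mono_on hint (hf.mul_const _) hs
            fun x hx => mul_log_div_le_mul_log (hf0 x hx) (hg x hx) (hfg x hx)
      _ = Real.log C := by rw [integral_mul_const, hf1, one_mul]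
      _ < ε := hC
  · rwa [integral_undef hint]

lemma integrableOn_of_isProbabilityMeasure_withDensity {f : α → ℝ} (hs : MeasurableSet s)
    (hf0 : ∀ x ∈ s, 0 ≤ f x) (hfm : AEStronglyMeasurable f (μ.restrict s))
    (hF : IsProbabilityMeasure ((μ.restrict s).withDensity fun x => ENNReal.ofReal (f x))) :
    IntegrableOn f s μ := by
  refine ⟨hfm, (hasFiniteIntegral_iff_ofReal ((ae_restrict_iff' hs).2 (ae_of_all _ hf0))).2 ?_⟩
  simpa [withDensity_apply _ MeasurableSet.univ] using hF.measure_univ.trans_lt ENNReal.one_lt_top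

lemma setIntegral_eq_one_of_isProbabilityMeasure_withDensity {f : α → ℝ} (hs : MeasurableSet s)
    (hf0 : ∀ x ∈ s, 0 ≤ f x) (hfm : AEStronglyMeasurable f (μ.restrict s))
    (hF : IsProbabilityMeasure ((μ.restrict s).withDensity fun x => ENNReal.ofReal (f x))) :
    ∫ x in s, f x ∂μ = 1 := by
  have h1 := hF.measure_univ
  rw [withDensity_apply _ MeasurableSet.univ, Measure.restrict_univ] at h1
  rw [integral_eq_lintegral_of_nonneg_ae ((ae_restrict_iff' hs).2 (ae_of_all _ hf0)) hfm, h1,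
    ENNReal.toReal_one]

end Integrals

theorem exists_stepFunction_setIntegral_mul_log_div_lt {α ι : Type*} [MeasurableSpace α]
    [Fintype ι] {μ : Measure α} {U : Set α} {R : ι → Set α} {c : ι → α} {f : α → ℝ} {ε : ℝ}
    (hε : 0 < ε) (hU : μ U = 1) (hRm : ∀ i, MeasurableSet (R i))
    (hR : Pairwise (Disjoint on R)) (hRU : ⋃ i, R i = U) (hc : ∀ i, c i ∈ R i)
    (hf0 : ∀ x ∈ U, 0 ≤ f x) (hf : IntegrableOn f U μ) (hf1 : ∫ x in U, f x ∂μ = 1)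
    (hosc : ∀ i, ∀ x ∈ R i, |f x - f (c i)| < ε / 4) :
    ∃ v : ι → ℝ, (∀ i, 0 < v i) ∧
      IsProbabilityMeasure
        ((μ.restrict U).withDensity fun x => ENNReal.ofReal (stepFunction R v x)) ∧
      ∫ x in U, f x * Real.log (f x / stepFunction R v x) ∂μ < ε := by
  subst hRU
  set δ := ε / 4 with hδ
  have hRfin : ∀ i, μ (R i) ≠ ⊤ := fun i =>
    ne_top_of_le_ne_top (hU ▸ ENNReal.one_ne_top) (measure_mono (subset_iUnion R i))
  have hvol : ∑ i, μ.real (R i) = 1 := by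
    rw [← measureReal_iUnion_fintype hR hRm hRfin, measureReal_def, hU, ENNReal.toReal_one]
  have hfc0 : ∀ i, 0 ≤ f (c i) := fun i => hf0 _ (mem_iUnion_of_mem i (hc i))
  set a : ι → ℝ := fun i => f (c i) + δ
  set C := ∑ i, a i * μ.real (R i)
  have hC : C = ∑ i, f (c i) * μ.real (R i) + δ := by
    simp only [C, a, add_mul, Finset.sum_add_distrib, ← Finset.mul_sum, hvol, mul_one]
  have hC0 : 0 < C := hC ▸ add_pos_of_nonneg_of_pos
    (Finset.sum_nonneg fun i _ => mul_nonneg (hfc0 i) measureReal_nonneg) (by positivity)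
  have hC1 : C ≤ 1 + 2 * δ := by
    have hlow := sum_mul_measureReal_le_setIntegral (b := fun i => f (c i) - δ) hRm hR hRfin hf
      fun i x hx => by linarith [(abs_sub_lt_iff.1 (hosc i x hx)).2]
    simp only [sub_mul, Finset.sum_sub_distrib, ← Finset.mul_sum, hvol, hf1] at hlow
    linarith
  have hva : ∀ i, C * (a i / C) = a i := fun i => mul_div_cancel₀ _ hC0.ne'
  refine ⟨fun i => a i / C, fun i => by have := hfc0 i; positivity, ?_, ?_⟩
  · refine isProbabilityMeasure_withDensity_stepFunction hRm (subset_iUnion R) hRfin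
      (fun i => by have := hfc0 i; positivity) ?_
    simp only [div_mul_eq_mul_div, ← Finset.sum_div, div_self hC0.ne', C]
  · refine setIntegral_mul_log_div_lt (MeasurableSet.iUnion hRm) hf0 hf hf1 (C := C) ?_ ?_ hε ?_
    · intro x hx
      obtain ⟨i, hxi⟩ := mem_iUnion.1 hx
      rw [stepFunction_eq_of_mem hR _ hxi]
      have := hfc0 i
      positivity
    · intro x hx
      obtain ⟨i, hxi⟩ := mem_iUnion.1 hx
      rw [stepFunction_eq_of_mem hR _ hxi, hva]
      linarith [(abs_sub_lt_iff.1 (hosc i x hxi)).1]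
    · linarith [Real.log_le_sub_one_of_pos hC0]

section Grid

variable {d N : ℕ}

lemma mem_Ioc_div_iff_natCeil_eq (hN : 0 < N) {k : ℕ} {x : ℝ} :
    x ∈ Ioc ((k : ℝ) / N) (((k : ℝ) + 1) / N) ↔ ⌈N * x⌉₊ = k + 1 := by
  have hN' : (0 : ℝ) < N := by exact_mod_cast hN
  rw [Nat.ceil_eq_iff k.succ_ne_zero, mem_Ioc, div_lt_iff₀' hN', le_div_iff₀' hN']
  push_cast
  simp

def gridCell (N : ℕ) (k : Fin d → Fin N) : Set (Fin d → ℝ) :=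
  univ.pi fun j => Ioc (((k j : ℕ) : ℝ) / N) ((((k j : ℕ) : ℝ) + 1) / N)

noncomputable def gridCorner (N : ℕ) (k : Fin d → Fin N) : Fin d → ℝ :=
  fun j => (((k j : ℕ) : ℝ) + 1) / N

lemma measurableSet_gridCell (k : Fin d → Fin N) : MeasurableSet (gridCell N k) :=
  MeasurableSet.univ_pi fun _ => measurableSet_Ioc

lemma pairwise_disjoint_gridCell (hN : 0 < N) : Pairwise (Disjoint on gridCell (d := d) N) := by
  intro k l hkl
  obtain ⟨j, hj⟩ := Function.ne_iff.1 hkl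
  refine disjoint_left.2 fun x hxk hxl => hj (Fin.ext ?_)
  have hk := (mem_Ioc_div_iff_natCeil_eq hN).1 (hxk j (mem_univ j))
  have hl := (mem_Ioc_div_iff_natCeil_eq hN).1 (hxl j (mem_univ j))
  omega

lemma gridCell_subset (hN : 0 < N) (k : Fin d → Fin N) :
    gridCell N k ⊆ univ.pi fun _ => Ioc 0 1 := fun x hx j _ => by
  obtain ⟨hlo, hhi⟩ := hx j (mem_univ j)
  have hk : ((k j : ℕ) : ℝ) + 1 ≤ N := by exact_mod_cast (k j).isLt
  exact ⟨lt_of_le_of_lt (by positivity) hlo, hhi.trans ((div_le_one (by positivity)).2 hk)⟩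

lemma iUnion_gridCell (hN : 0 < N) :
    ⋃ k, gridCell (d := d) N k = univ.pi fun _ => Ioc 0 1 := by
  refine Subset.antisymm (iUnion_subset (gridCell_subset hN)) fun x hx => ?_
  have hceil : ∀ j, 0 < ⌈N * x j⌉₊ ∧ ⌈N * x j⌉₊ ≤ N := fun j => by
    obtain ⟨hx0, hx1⟩ := hx j (mem_univ j)
    exact ⟨Nat.ceil_pos.2 (by positivity), Nat.ceil_le.2 (by nlinarith)⟩
  refine mem_iUnion.2 ⟨fun j => ⟨⌈N * x j⌉₊ - 1, by have := hceil j; omega⟩, fun j _ => ?_⟩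
  rw [mem_Ioc_div_iff_natCeil_eq hN]
  have := hceil j
  simp only
  omega

lemma gridCorner_mem_gridCell (hN : 0 < N) (k : Fin d → Fin N) :
    gridCorner N k ∈ gridCell N k := fun _ _ =>
  ⟨div_lt_div_of_pos_right (lt_add_one _) (Nat.cast_pos.2 hN), le_rfl⟩

lemma dist_gridCorner_le {k : Fin d → Fin N} {x : Fin d → ℝ} (hx : x ∈ gridCell N k) :
    dist x (gridCorner N k) ≤ 1 / N := by
  refine (dist_pi_le_iff (by positivity)).2 fun j => ?_
  obtain ⟨hlo, hhi⟩ := hx j (mem_univ j)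
  have hwidth : (((k j : ℕ) : ℝ) + 1) / N = ((k j : ℕ) : ℝ) / N + 1 / N := by ring
  rw [Real.dist_eq, abs_le, gridCorner]
  constructor <;> linarith

lemma UniformContinuousOn.exists_abs_sub_gridCorner_lt {f : (Fin d → ℝ) → ℝ}
    (hf : UniformContinuousOn f (univ.pi fun _ => Ioc 0 1)) {δ : ℝ} (hδ : 0 < δ) :
    ∃ N > 0, ∀ k : Fin d → Fin N, ∀ x ∈ gridCell N k, |f x - f (gridCorner N k)| < δ := by
  obtain ⟨η, hη, hfη⟩ := Metric.uniformContinuousOn_iff.1 hf δ hδ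
  obtain ⟨N, hN⟩ := exists_nat_one_div_lt hη
  have hN0 : 0 < N + 1 := N.succ_pos
  refine ⟨N + 1, hN0, fun k x hx => ?_⟩
  have hdist : dist x (gridCorner (N + 1) k) < η :=
    (dist_gridCorner_le hx).trans_lt (by exact_mod_cast hN)
  simpa [Real.dist_eq] using hfη x (gridCell_subset hN0 k hx) _
    (gridCell_subset hN0 k (gridCorner_mem_gridCell hN0 k)) hdist

end Grid

theorem stmt17_general
    (d : ℕ) (U : Set (Fin d → ℝ)) (hU : U = Set.univ.pi fun _ => Ioc (0:ℝ) 1)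
    (f : (Fin d → ℝ) → ℝ) (Fstar : Measure (Fin d → ℝ)) [IsProbabilityMeasure Fstar]
    (hf0 : ∀ x ∈ U, 0 ≤ f x)
    (hF : Fstar = (volume.restrict U).withDensity fun x => ENNReal.ofReal (f x))
    (hfc : UniformContinuousOn f U) :
    ∀ ε > 0, ∃ (n : ℕ) (lo hi : Fin n → Fin d → ℝ) (v : Fin n → ℝ),
      (∀ i, 0 < v i) ∧
      (∀ i i', i ≠ i' →
        Disjoint (Set.univ.pi fun j => Ioc (lo i j) (hi i j))
          (Set.univ.pi fun j => Ioc (lo i' j) (hi i' j))) ∧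
      (⋃ i, Set.univ.pi fun j => Ioc (lo i j) (hi i j)) = U ∧
      IsProbabilityMeasure
        ((volume.restrict U).withDensity fun x => ENNReal.ofReal
          (∑ i, Set.indicator (Set.univ.pi fun j => Ioc (lo i j) (hi i j))
            (fun _ => v i) x)) ∧
      (∫ x in U, f x * Real.log (f x /
          ∑ i, Set.indicator (Set.univ.pi fun j => Ioc (lo i j) (hi i j))
            (fun _ => v i) x)) < ε := by
  intro ε hε
  have hUm : MeasurableSet U := hU ▸ MeasurableSet.univ_pi fun _ => measurableSet_Ioc
  have hU1 : volume U = 1 := by simp [hU, volume_pi_pi, Real.volume_Ioc]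
  have hfm : AEStronglyMeasurable f (volume.restrict U) := hfc.continuousOn.aestronglyMeasurable hUm
  have hFU : IsProbabilityMeasure
      ((volume.restrict U).withDensity fun x => ENNReal.ofReal (f x)) := hF ▸ inferInstance
  obtain ⟨N, hN, hosc⟩ := (hU ▸ hfc).exists_abs_sub_gridCorner_lt (show 0 < ε / 4 by positivity)
  let e := (finFunctionFinEquiv (m := N) (n := d)).symm
  have hdisj := (pairwise_disjoint_gridCell (d := d) hN).comp_of_injective e.injective
  have hunion : ⋃ i, gridCell N (e i) = U := by
    rw [e.surjective.iUnion_comp (gridCell N), iUnion_gridCell hN, hU]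
  obtain ⟨v, hv, hG, hKL⟩ := exists_stepFunction_setIntegral_mul_log_div_lt
    (R := fun i => gridCell N (e i)) (c := fun i => gridCorner N (e i)) hε hU1
    (fun _ => measurableSet_gridCell _) hdisj hunion (fun i => gridCorner_mem_gridCell hN (e i))
    hf0 (integrableOn_of_isProbabilityMeasure_withDensity hUm hf0 hfm hFU)
    (setIntegral_eq_one_of_isProbabilityMeasure_withDensity hUm hf0 hfm hFU)
    fun i => hosc (e i)
  exact ⟨_, fun i j => ((e i j : ℕ) : ℝ) / N, fun i j => (((e i j : ℕ) : ℝ) + 1) / N,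
    v, hv, fun _ _ h => hdisj h, hunion, hG, hKL⟩

/-- Let `F*` be a probability measure on `(0,1]^d` with a uniformly
continuous density `f`.  Then for every `ε > 0` there is a probability measure `G` whose
density is piecewise constant, with strictly positive values, on a finite partition of
`(0,1]^d` into axis-aligned rectangles, such that
`KL(F*‖G) = ∫ f log(f/g) dμ < ε`. -/
theorem stmt17
    (d : ℕ) (U : Set (Fin d → ℝ)) (hU : U = Set.univ.pi fun _ => Ioc (0:ℝ) 1)
    (f : (Fin d → ℝ) → ℝ) (Fstar : Measure (Fin d → ℝ)) [IsProbabilityMeasure Fstar]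
    (hfm : Measurable f) (hf0 : ∀ x ∈ U, 0 ≤ f x)
    (hF : Fstar = (volume.restrict U).withDensity fun x => ENNReal.ofReal (f x))
    (hfc : UniformContinuousOn f U) :
    ∀ ε > 0, ∃ (n : ℕ) (lo hi : Fin n → Fin d → ℝ) (v : Fin n → ℝ),
      (∀ i, 0 < v i) ∧
      (∀ i i', i ≠ i' →
        Disjoint (Set.univ.pi fun j => Ioc (lo i j) (hi i j))
          (Set.univ.pi fun j => Ioc (lo i' j) (hi i' j))) ∧
      (⋃ i, Set.univ.pi fun j => Ioc (lo i j) (hi i j)) = U ∧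
      IsProbabilityMeasure
        ((volume.restrict U).withDensity fun x => ENNReal.ofReal
          (∑ i, Set.indicator (Set.univ.pi fun j => Ioc (lo i j) (hi i j))
            (fun _ => v i) x)) ∧
      (∫ x in U, f x * Real.log (f x /
          ∑ i, Set.indicator (Set.univ.pi fun j => Ioc (lo i j) (hi i j))
            (fun _ => v i) x)) < ε :=
  stmt17_general d U hU f Fstar hf0 hF hfc
end
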